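/- Let n ≥ 2, let 2 ≤ k ≤ n, α > 0 and N₀ > 0. Suppose λ = (λ₁,…,λ_n) ∈ Γ_k with λ₁ ≥ λ₂ ≥ ⋯ ≥ λ_n and S_k(λ) ≤ N₀. Then λ_{k−1} ≤ (N₀/α)^{1/(k−1)} and λ_n > −K₀, where K₀ := (n − k)(N₀/α)^{1/(k−1)} (in particular λ_n > −K₀' for any K₀' ≥ (n−k)(N₀/α)^{1/(k−1)}). -/

import Mathlib

open scoped BigOperators

/-- The `k`-th elementary symmetric polynomial `σ_k(λ)` of `λ ∈ ℝⁿ`, indexed by `k : ℤ`,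
with the conventions `σ₀ = 1` and `σ_k = 0` for `k < 0` or `k > n`. -/
noncomputable def esymmZ (n : ℕ) (k : ℤ) (lam : Fin n → ℝ) : ℝ :=
  if k < 0 then 0 else ∑ s ∈ Finset.univ.powersetCard k.toNat, ∏ i ∈ s, lam i

/-- `S_k(λ) := σ_k(λ) + α σ_{k-1}(λ)`. -/
noncomputable def SZ (n : ℕ) (α : ℝ) (k : ℤ) (lam : Fin n → ℝ) : ℝ :=
  esymmZ n k lam + α * esymmZ n (k - 1) lam

/-- The Garding cone `Γ_m = {λ ∈ ℝⁿ : σ_j(λ) > 0 for j = 1,…,m}` (so `Γ₀ = ℝⁿ`). -/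
def Gamma (n : ℕ) (m : ℕ) : Set (Fin n → ℝ) :=
  {lam | ∀ j : ℕ, 1 ≤ j → j ≤ m → 0 < esymmZ n j lam}

/-- `Γ̃_k := Γ_{k-1} ∩ {λ : S_k(λ) > 0}`. -/
def GammaTilde (n : ℕ) (α : ℝ) (k : ℕ) : Set (Fin n → ℝ) :=
  Gamma n (k - 1) ∩ {lam | 0 < SZ n α k lam}

/-- `σ_k(λ|i)`: the `k`-th elementary symmetric polynomial of the vector obtained
from `λ` by deleting the entry `λ_i`. -/
noncomputable def esymmDel (n : ℕ) (k : ℤ) (lam : Fin n → ℝ) (i : Fin n) : ℝ :=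
  if k < 0 then 0 else
    ∑ s ∈ (Finset.univ.erase i).powersetCard k.toNat, ∏ j ∈ s, lam j

/-- `S_k(λ|i) := σ_k(λ|i) + α σ_{k-1}(λ|i)`.  In particular
`S_k^{ii}(λ) = ∂S_k/∂λ_i = S_{k-1}(λ|i) = SDel n α (k-1) lam i`. -/
noncomputable def SDel (n : ℕ) (α : ℝ) (k : ℤ) (lam : Fin n → ℝ) (i : Fin n) : ℝ :=
  esymmDel n k lam i + α * esymmDel n (k - 1) lam i

/-- `σ_k(λ|pq)`: the `k`-th elementary symmetric polynomial of the vector obtained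
from `λ` by deleting the entries `λ_p` and `λ_q`. -/
noncomputable def esymmDel2 (n : ℕ) (k : ℤ) (lam : Fin n → ℝ) (p q : Fin n) : ℝ :=
  if k < 0 then 0 else
    ∑ s ∈ ((Finset.univ.erase p).erase q).powersetCard k.toNat, ∏ l ∈ s, lam l

/-- `S_k^{pp,qq}(λ) = ∂²S_k/∂λ_p∂λ_q`, which equals
`σ_{k-2}(λ|pq) + α σ_{k-3}(λ|pq)` for `p ≠ q`, and `0` for `p = q`. -/
noncomputable def Spq (n : ℕ) (α : ℝ) (k : ℤ) (lam : Fin n → ℝ) (p q : Fin n) : ℝ :=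
  if p = q then 0 else esymmDel2 n (k - 2) lam p q + α * esymmDel2 n (k - 3) lam p q

/-!
Deleting any entry `b` of a vector in `Γ_m` leaves a vector in `Γ_{m-1}`. This is clear if all
entries are positive; otherwise some other entry `a ≤ 0` can be dropped without leaving `Γ_m`,
induction removes `b` from the remainder `(b, μ)`, and Newton's inequality
`σ_i σ_{i+2} ≤ σ_{i+1}²` for `μ` (from Rolle's theorem) turns `σ_{i+2}(a, b, μ) > 0` into
`σ_{i+1}(a, μ) > 0`.

Deleting the largest entries of `λ ∈ Γ_k` one at a time and expanding `σ_j` along the largest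
entry gives `σ_{k-1}(λ) ≥ λ_{k-1}^{k-1}` when `λ_{k-1} > 0`, while `σ_k(λ) > 0` gives
`α σ_{k-1}(λ) ≤ S_k(λ) ≤ N₀`. After deleting `λ_1, …, λ_{k-1}` the rest lies in `Γ_1`, so
`λ_k + ⋯ + λ_n > 0`, and each of `λ_k, …, λ_{n-1}` is at most `λ_{k-1}`.
-/

namespace Multiset

variable {R : Type*} [CommSemiring R]

@[simp]
theorem esymm_zero (s : Multiset R) : s.esymm 0 = 1 := by
  simp [esymm]

theorem esymm_cons_succ (a : R) (s : Multiset R) (k : ℕ) :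
    (a ::ₘ s).esymm (k + 1) = s.esymm (k + 1) + a * s.esymm k := by
  simp only [esymm, powersetCard_cons, map_add, sum_add, map_map, Function.comp_def, prod_cons,
    sum_map_mul_left]

theorem esymm_eq_zero_of_card_lt {s : Multiset R} {k : ℕ} (h : card s < k) : s.esymm k = 0 := by
  simp [esymm, powersetCard_eq_empty _ h]

theorem esymm_one (s : Multiset R) : s.esymm 1 = s.sum := by
  simp [esymm, powersetCard_one, map_map]

end Multiset

namespace Polynomial

open Multiset in
theorem two_mul_coeff_zero_mul_coeff_two_prod_X_sub_C_le (s : Multiset ℝ) :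
    2 * ((s.map (X - C ·)).prod.coeff 0 * (s.map (X - C ·)).prod.coeff 2) ≤
      (s.map (X - C ·)).prod.coeff 1 ^ 2 := by
  induction s using Multiset.induction with
  | empty => simp [coeff_one]
  | cons a s ih =>
    rw [map_cons, prod_cons, mul_comm (X - C a)]
    set p := (s.map (X - C ·)).prod
    rw [mul_coeff_zero, coeff_mul_X_sub_C, coeff_mul_X_sub_C]
    simp only [coeff_sub, coeff_X_zero, coeff_C_zero, zero_sub]
    -- `(b₀ - a b₁)² - 2 (-a b₀)(b₁ - a b₂) = b₀² + a² (b₁² - 2 b₀ b₂)`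
    nlinarith [sq_nonneg (p.coeff 0), mul_le_mul_of_nonneg_left ih (sq_nonneg a)]

theorem Splits.two_mul_coeff_zero_mul_coeff_two_le {f : ℝ[X]} (hf : f.Splits) :
    2 * (f.coeff 0 * f.coeff 2) ≤ f.coeff 1 ^ 2 := by
  have h := mul_le_mul_of_nonneg_left (two_mul_coeff_zero_mul_coeff_two_prod_X_sub_C_le f.roots)
    (sq_nonneg f.leadingCoeff)
  rw [hf.eq_prod_roots]
  simp only [coeff_C_mul]
  linarith

theorem Splits.derivative {f : ℝ[X]} (hf : f.Splits) : (Polynomial.derivative f).Splits := by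
  rcases eq_or_ne (Polynomial.derivative f) 0 with h | h
  · rw [h]; exact Splits.zero
  have hdeg : f.natDegree ≠ 0 := fun h0 => h (derivative_of_natDegree_zero h0)
  rw [splits_iff_card_roots] at hf ⊢
  have := card_roots_le_derivative f
  have := card_roots' (Polynomial.derivative f)
  have := natDegree_derivative_le f
  omega

end Polynomial

theorem Nat.descFactorial_succ_self_sq_le (d : ℕ) :
    ((d + 1).descFactorial d) ^ 2 ≤ 2 * (d.descFactorial d * (d + 2).descFactorial d) := by
  have h1 := Nat.factorial_mul_descFactorial (show d ≤ d + 1 by omega)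
  have h2 := Nat.factorial_mul_descFactorial (show d ≤ d + 2 by omega)
  simp only [Nat.add_sub_cancel_left, Nat.factorial_one, one_mul, Nat.factorial_two] at h1 h2
  rw [Nat.descFactorial_self, h1, mul_left_comm, h2, Nat.factorial_succ (d + 1), sq,
    Nat.factorial_succ d]
  nlinarith [Nat.factorial_pos d]

open Polynomial in
/-- Newton's inequality, in the unnormalised form valid for all real multisets. -/
theorem Multiset.esymm_mul_esymm_add_two_le_sq (s : Multiset ℝ) (j : ℕ) :
    s.esymm j * s.esymm (j + 2) ≤ s.esymm (j + 1) ^ 2 := by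
  rcases lt_or_ge (card s) (j + 2) with hs | hs
  · rw [esymm_eq_zero_of_card_lt hs, mul_zero]
    positivity
  obtain ⟨d, hd⟩ := Nat.exists_eq_add_of_le hs
  -- differentiating `∏ (X + r)` `d` times leaves a split polynomial of degree `j + 2` whose three
  -- lowest coefficients are multiples of `e_{j+2}`, `e_{j+1}`, `e_j`
  set Q := derivative^[d] (s.map (X + C ·)).prod
  have hQ : Q.Splits := Function.Iterate.rec (fun p : ℝ[X] => p.Splits)
    (Splits.multisetProd fun f hf => by
      obtain ⟨r, -, rfl⟩ := mem_map.1 hf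
      exact Splits.X_add_C r)
    (fun _ h => h.derivative) d
  have hcoeff (m : ℕ) (hm : m ≤ 2) :
      Q.coeff m = (d + m).descFactorial d * s.esymm (j + 2 - m) := by
    rw [coeff_iterate_derivative, prod_X_add_C_coeff s (by omega), nsmul_eq_mul, add_comm m d]
    congr 2
    omega
  have key := hQ.two_mul_coeff_zero_mul_coeff_two_le
  rw [hcoeff 0 (by omega), hcoeff 1 (by omega), hcoeff 2 (by omega)] at key
  simp only [Nat.sub_zero, add_zero, Nat.reduceSubDiff, Nat.add_sub_cancel] at key
  have hc : (((d + 1).descFactorial d) ^ 2 : ℝ) ≤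
      2 * (d.descFactorial d * (d + 2).descFactorial d) := by
    exact_mod_cast Nat.descFactorial_succ_self_sq_le d
  have hc1 : (0 : ℝ) < ((d + 1).descFactorial d) ^ 2 := by
    have := Nat.descFactorial_pos.2 (show d ≤ d + 1 by omega)
    positivity
  rcases le_or_gt (s.esymm j * s.esymm (j + 2)) 0 with hneg | hpos
  · exact hneg.trans (sq_nonneg _)
  refine le_of_mul_le_mul_left ?_ hc1
  nlinarith [mul_le_mul_of_nonneg_right hc hpos.le]

namespace Multiset

def gardingCone (m : ℕ) : Set (Multiset ℝ) :=
  {s | ∀ j, 1 ≤ j → j ≤ m → 0 < s.esymm j}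

variable {s t : Multiset ℝ} {m : ℕ}

theorem esymm_pos_of_mem_gardingCone (hs : s ∈ gardingCone m) {j : ℕ} (hj : j ≤ m) :
    0 < s.esymm j := by
  rcases j with _ | j
  · simp
  · exact hs _ (by omega) hj

theorem gardingCone_anti : Antitone gardingCone :=
  fun _ _ hmm' _ hs j hj1 hj2 => hs j hj1 (hj2.trans hmm')

theorem le_card_of_mem_gardingCone (hs : s ∈ gardingCone m) : m ≤ card s := by
  by_contra! h
  exact (esymm_pos_of_mem_gardingCone hs le_rfl).ne' (esymm_eq_zero_of_card_lt h)

theorem esymm_pos_of_forall_pos (hs : ∀ x ∈ s, 0 < x) {j : ℕ} (hj : j ≤ card s) :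
    0 < s.esymm j := by
  induction s using Multiset.induction generalizing j with
  | empty => simp_all
  | cons a s ih =>
    rcases j with _ | j
    · simp
    have ha := hs a (mem_cons_self a s)
    have hs' : ∀ x ∈ s, 0 < x := fun x hx => hs x (mem_cons_of_mem hx)
    rw [card_cons] at hj
    rw [esymm_cons_succ]
    have hsucc : 0 ≤ s.esymm (j + 1) := by
      rcases le_or_gt (j + 1) (card s) with h | h
      · exact (ih hs' h).le
      · exact (esymm_eq_zero_of_card_lt h).ge
    nlinarith [ih hs' (show j ≤ card s by omega)]

theorem mem_gardingCone_of_cons_of_nonpos {a : ℝ} (ha : a ≤ 0) (hs : a ::ₘ s ∈ gardingCone m) :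
    s ∈ gardingCone m := by
  intro j hj1 hjm
  induction j with
  | zero => omega
  | succ j ih =>
    have h := hs (j + 1) (by omega) hjm
    rw [esymm_cons_succ] at h
    have : 0 ≤ s.esymm j := by
      rcases j with _ | j
      · simp
      · exact (ih (by omega) (by omega)).le
    nlinarith

theorem mem_gardingCone_pred_of_cons {b : ℝ} (hs : b ::ₘ t ∈ gardingCone m) :
    t ∈ gardingCone (m - 1) := by
  induction t using Multiset.strongInductionOn with
  | ih t ih =>
  have hcard := le_card_of_mem_gardingCone hs
  rw [card_cons] at hcard
  by_cases hpos : ∀ x ∈ t, 0 < x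
  · exact fun j _ hj => esymm_pos_of_forall_pos hpos (by omega)
  push Not at hpos
  obtain ⟨a, hat, ha⟩ := hpos
  obtain ⟨u, rfl⟩ := exists_cons_of_mem hat
  have hw : b ::ₘ u ∈ gardingCone m := by
    rw [cons_swap] at hs
    exact mem_gardingCone_of_cons_of_nonpos ha hs
  have hu := ih u (lt_cons_self u a) hw
  intro j hj1 hjm
  obtain ⟨i, rfl⟩ : ∃ i, j = i + 1 := ⟨j - 1, by omega⟩
  have hF := esymm_pos_of_mem_gardingCone hu (show i ≤ m - 1 by omega)
  have hbu := hw (i + 1) (by omega) (by omega)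
  have hbau := hs (i + 2) (by omega) (by omega)
  rw [esymm_cons_succ] at hbu ⊢
  rw [esymm_cons_succ, esymm_cons_succ, esymm_cons_succ] at hbau
  have hnewton := esymm_mul_esymm_add_two_le_sq u i
  -- with `E = σ_{i+1}(u)`, `F = σ_i(u)`: `F σ_{i+2}(b, a, u) ≤ (E + a F) (E + b F)` by Newton
  have hprod : 0 < (u.esymm (i + 1) + a * u.esymm i) * (u.esymm (i + 1) + b * u.esymm i) := by
    nlinarith [mul_pos hF hbau]
  exact (pos_iff_pos_of_mul_pos hprod).2 hbu

end Multiset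

namespace List

open Multiset

theorem mem_gardingCone_drop {L : List ℝ} {m : ℕ} (hL : (L : Multiset ℝ) ∈ gardingCone m)
    (i : ℕ) : (L.drop i : Multiset ℝ) ∈ gardingCone (m - i) := by
  induction L generalizing i m with
  | nil => exact gardingCone_anti (Nat.sub_le m i) (by simpa using hL)
  | cons b L ih =>
    rcases i with _ | i
    · simpa using hL
    rw [← cons_coe] at hL
    rw [drop_succ_cons, add_comm, ← Nat.sub_sub]
    exact ih (mem_gardingCone_pred_of_cons hL) i

theorem pow_le_esymm_of_le_take {L : List ℝ} {j : ℕ}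
    (hL : (L : Multiset ℝ) ∈ gardingCone (j + 1)) {x : ℝ} (hx0 : 0 ≤ x)
    (hx : ∀ y ∈ L.take j, x ≤ y) : x ^ j ≤ (L : Multiset ℝ).esymm j := by
  induction j generalizing L with
  | zero => simp
  | succ j ih =>
    rcases L with _ | ⟨b, L⟩
    · simpa using le_card_of_mem_gardingCone hL
    rw [← cons_coe] at hL ⊢
    have hL' := mem_gardingCone_pred_of_cons hL
    have hb : x ≤ b := hx b (by simp)
    have hpow := ih hL' fun y hy => hx y (by simp [hy])
    have hsucc := hL' (j + 1) (by omega) le_rfl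
    rw [esymm_cons_succ, pow_succ']
    nlinarith [mul_le_mul hb hpow (by positivity) (hx0.trans hb)]

theorem neg_length_dropLast_mul_lt_getLast {D : List ℝ} (hD : D ≠ []) (hsum : 0 < D.sum) {x : ℝ}
    (hx : ∀ y ∈ D.dropLast, y ≤ x) : -(D.dropLast.length * x) < D.getLast hD := by
  rw [← dropLast_append_getLast hD, sum_append, sum_singleton] at hsum
  have := sum_le_card_nsmul _ _ hx
  rw [nsmul_eq_mul] at this
  linarith

end List

section Antitone

variable {α : Type*} [Preorder α] {n : ℕ} {f : Fin n → α}

theorem Antitone.le_of_mem_take_ofFn (hf : Antitone f) {i : Fin n} {j : ℕ} (hij : j ≤ i + 1)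
    {y : α} (hy : y ∈ (List.ofFn f).take j) : f i ≤ y := by
  obtain ⟨m, hm, rfl⟩ := List.mem_take_iff_getElem.1 hy
  exact List.getElem_ofFn _ ▸ hf (Fin.mk_le_mk.2 (by omega))

theorem Antitone.le_of_mem_drop_ofFn (hf : Antitone f) {i : Fin n} {j : ℕ} (hij : i < j)
    {y : α} (hy : y ∈ (List.ofFn f).drop j) : y ≤ f i := by
  obtain ⟨m, hm, rfl⟩ := List.mem_drop_iff_getElem.1 hy
  exact List.getElem_ofFn _ ▸ hf (Fin.mk_le_mk.2 (by omega))

end Antitone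

theorem Real.le_rpow_one_div_of_pow_le {x y : ℝ} {m : ℕ} (hx : 0 ≤ x) (hm : m ≠ 0)
    (h : x ^ m ≤ y) : x ≤ y ^ (1 / (m : ℝ)) := by
  rw [one_div]
  calc x = (x ^ m) ^ (m : ℝ)⁻¹ := (pow_rpow_inv_natCast hx hm).symm
    _ ≤ y ^ (m : ℝ)⁻¹ := rpow_le_rpow (by positivity) h (by positivity)

open Multiset List

theorem esymmZ_natCast_eq_esymm_ofFn (n j : ℕ) (lam : Fin n → ℝ) :
    esymmZ n j lam = (ofFn lam : Multiset ℝ).esymm j := by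
  rw [esymmZ, if_neg (by omega), ← Fin.univ_val_map, Finset.esymm_map_val, Int.toNat_natCast]

theorem mem_Gamma_iff_ofFn_mem_gardingCone {n k : ℕ} {lam : Fin n → ℝ} :
    lam ∈ Gamma n k ↔ (ofFn lam : Multiset ℝ) ∈ gardingCone k := by
  simp [Gamma, gardingCone, esymmZ_natCast_eq_esymm_ofFn]

theorem esymmZ_sub_one_le_div_of_SZ_le {n : ℕ} {α N₀ : ℝ} {k : ℤ} {lam : Fin n → ℝ}
    (hα : 0 < α) (hσ : 0 < esymmZ n k lam) (hS : SZ n α k lam ≤ N₀) :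
    esymmZ n (k - 1) lam ≤ N₀ / α := by
  rw [SZ] at hS
  rw [le_div_iff₀ hα]
  linarith

theorem pow_le_esymm_ofFn_of_antitone {n k : ℕ} {lam : Fin n → ℝ} (hsort : Antitone lam)
    (hΓ : (ofFn lam : Multiset ℝ) ∈ gardingCone k) {i : Fin n} (hi : (i : ℕ) + 2 = k)
    (hx : 0 ≤ lam i) : lam i ^ (k - 1) ≤ (ofFn lam : Multiset ℝ).esymm (k - 1) :=
  pow_le_esymm_of_le_take (by rwa [Nat.sub_add_cancel (by omega)]) hx
    fun _ hy => hsort.le_of_mem_take_ofFn (by omega) hy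

theorem neg_mul_lt_last_of_antitone {n k : ℕ} {lam : Fin n → ℝ} (hsort : Antitone lam)
    (hΓ : (ofFn lam : Multiset ℝ) ∈ gardingCone k) {i j : Fin n} (hi : (i : ℕ) + 2 = k)
    (hj : (j : ℕ) + 1 = n) : -(((n : ℝ) - k) * lam i) < lam j := by
  have hk : k ≤ n := by simpa using le_card_of_mem_gardingCone hΓ
  set D := (ofFn lam).drop (k - 1)
  have hD : D ≠ [] := by simp [D]; omega
  have hsum : 0 < D.sum := by
    have := mem_gardingCone_drop hΓ (k - 1) 1 le_rfl (by omega)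
    rwa [esymm_one, sum_coe] at this
  have hlen : (D.dropLast.length : ℝ) = n - k := by
    rw [length_dropLast, length_drop, length_ofFn, Nat.sub_sub, Nat.sub_add_cancel (by omega),
      Nat.cast_sub hk]
  have := neg_length_dropLast_mul_lt_getLast hD hsum fun y hy =>
    hsort.le_of_mem_drop_ofFn (i := i) (by omega) (dropLast_subset _ hy)
  rwa [getLast_drop, getLast_ofFn, hlen, show (⟨n - 1, _⟩ : Fin n) = j by ext; simp; omega]
    at this

theorem lam_bounds_of_Sk_le
    (n : ℕ) (k : ℕ) (hk1 : 2 ≤ k) (hk : k ≤ n)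
    (α : ℝ) (hα : 0 < α) (N₀ : ℝ) (hN₀ : 0 < N₀)
    (lam : Fin n → ℝ) (hlam : lam ∈ Gamma n k) (hsort : Antitone lam)
    (hSk : SZ n α k lam ≤ N₀) :
    lam ⟨k - 2, by omega⟩ ≤ (N₀ / α) ^ ((1 : ℝ) / ((k : ℝ) - 1)) ∧
    lam ⟨n - 1, by omega⟩ >
      -(((n : ℝ) - (k : ℝ)) * (N₀ / α) ^ ((1 : ℝ) / ((k : ℝ) - 1))) := by
  have hΓ := mem_Gamma_iff_ofFn_mem_gardingCone.1 hlam
  have hxM : lam ⟨k - 2, by omega⟩ ≤ (N₀ / α) ^ ((1 : ℝ) / ((k : ℝ) - 1)) := by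
    rcases le_or_gt (lam ⟨k - 2, by omega⟩) 0 with hx0 | hx0
    · exact hx0.trans (by positivity)
    have hσ := esymmZ_sub_one_le_div_of_SZ_le hα (hlam k (by omega) le_rfl) hSk
    rw [show (k : ℤ) - 1 = (k - 1 : ℕ) by omega, esymmZ_natCast_eq_esymm_ofFn] at hσ
    rw [← Nat.cast_pred (by omega)]
    exact Real.le_rpow_one_div_of_pow_le hx0.le (by omega)
      ((pow_le_esymm_ofFn_of_antitone hsort hΓ (by simp only; omega) hx0.le).trans hσ)
  refine ⟨hxM, lt_of_le_of_lt ?_ (neg_mul_lt_last_of_antitone hsort hΓ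
    (i := ⟨k - 2, by omega⟩) (by simp only; omega) (by simp only; omega))⟩
  have hnk : (0 : ℝ) ≤ n - k := sub_nonneg.2 (by exact_mod_cast hk)
  exact neg_le_neg (mul_le_mul_of_nonneg_left hxM hnk)
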